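/- Let B be an N×N real matrix whose (h,k) block vanishes whenever h > k+1 (with respect to the partition d_0, …, d_r of N). Let h,k ∈ {0,…,r} with n := h−k ≥ 1. Then for any i ∈ {d̄_{h-1}+1,…,d̄_h} and j ∈ {d̄_{k-1}+1,…,d̄_k}, the (i,j) entry of the matrix exponential satisfies (e^{tB})_{ij} = O(t^n) as t → 0; more precisely (e^{tB})_{ij} = t^n (B^n)_{ij}/n! + O(t^{n+1}) as t → 0. -/

import Mathlib

open MeasureTheory Real Matrix Filter Topology

noncomputable section

namespace Paper

/-- Index embedding with modular wraparound (it is the natural embedding on valid indices). -/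
def idx (N : ℕ) (hN : 0 < N) (n : ℕ) : Fin N := ⟨n % N, Nat.mod_lt n hN⟩

/-- Partial sums `d̄ m = d_0 + ⋯ + d_{m-1}` of the block dimensions. -/
def dbar (dv : ℕ → ℕ) (m : ℕ) : ℕ := ∑ l ∈ Finset.range m, dv l

/-- Block index of a coordinate `i`. -/
def blk (r : ℕ) (dv : ℕ → ℕ) (i : ℕ) : ℕ :=
  ((Finset.range r).filter fun m => dbar dv (m + 1) ≤ i).card

/-- Anisotropic quasi-norm `|x|_B`. -/
def Bnorm (N r : ℕ) (dv : ℕ → ℕ) (x : Fin N → ℝ) : ℝ :=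
  ∑ j ∈ Finset.range (r + 1), ∑ i : Fin N,
    if dbar dv j ≤ (i : ℕ) ∧ (i : ℕ) < dbar dv (j + 1)
    then |x i| ^ ((1 : ℝ) / (2 * (j : ℝ) + 1)) else 0

/-- Homogeneous dimension `Q`. -/
def Qdim (r : ℕ) (dv : ℕ → ℕ) : ℕ := ∑ j ∈ Finset.range (r + 1), (2 * j + 1) * dv j

/-- Anisotropic dilation matrix `D(λ)`. -/
def Dil (N r : ℕ) (dv : ℕ → ℕ) (lam : ℝ) : Matrix (Fin N) (Fin N) ℝ :=
  Matrix.of fun i j => if i = j then lam ^ (2 * blk r dv (i : ℕ) + 1) else 0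

/-- `B`-length `[ν]_B` of a multi-index `ν`. -/
def nuB (N r : ℕ) (dv : ℕ → ℕ) (ν : Fin N → ℕ) : ℕ :=
  ∑ i : Fin N, (2 * blk r dv (i : ℕ) + 1) * ν i

/-- Partial derivative along the `i`-th coordinate direction (as a line derivative). -/
def pd (N : ℕ) (i : Fin N) (f : (Fin N → ℝ) → ℝ) (x : Fin N → ℝ) : ℝ :=
  lineDeriv ℝ f x (Pi.single i 1)

/-- Iterated partial derivative along the `i`-th coordinate. -/
def pdPow (N : ℕ) (i : Fin N) : ℕ → ((Fin N → ℝ) → ℝ) → (Fin N → ℝ) → ℝ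
  | 0 => fun f => f
  | n + 1 => fun f => pd N i (pdPow N i n f)

/-- Multi-index partial derivative `∂_x^ν`. -/
def pdMulti (N : ℕ) (ν : Fin N → ℕ) (f : (Fin N → ℝ) → ℝ) : (Fin N → ℝ) → ℝ :=
  (List.finRange N).foldr (fun i g => pdPow N i (ν i) g) f

/-- Gaussian kernel `g(C,z) = ((2π)^N det C)^{-1/2} exp(-⟨C⁻¹z,z⟩/2)`. -/
def gauss (N : ℕ) (C : Matrix (Fin N) (Fin N) ℝ) (z : Fin N → ℝ) : ℝ :=
  (Real.sqrt ((2 * π) ^ N * C.det))⁻¹ * Real.exp (-(1 / 2) * (C⁻¹.mulVec z ⬝ᵥ z))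

/-- The `N×N` matrix with `I_d` in the upper-left `d×d` block and zeros elsewhere. -/
def Emat (N d : ℕ) : Matrix (Fin N) (Fin N) ℝ :=
  Matrix.of fun i j => if (i : ℕ) = (j : ℕ) ∧ (i : ℕ) < d then 1 else 0

/-- The standing assumptions (Assumptions 1.1, 1.2, 1.3) of the paper. -/
structure Setting (N d : ℕ) where
  hd : 1 ≤ d
  hdN : d ≤ N
  hN : 0 < N
  /-- the time horizon `T̄` -/
  Tbar : ℝ
  hTbar : 0 < Tbar
  /-- the drift matrix `B` -/
  B : Matrix (Fin N) (Fin N) ℝ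
  /-- number of blocks minus one -/
  r : ℕ
  /-- block dimensions `d_0, …, d_r` -/
  dv : ℕ → ℕ
  hd0 : dv 0 = d
  hposdv : ∀ j ≤ r, 1 ≤ dv j
  hmono : ∀ j, j < r → dv (j + 1) ≤ dv j
  hsum : dbar dv (r + 1) = N
  /-- blocks `(h,k)` with `h > k+1` vanish -/
  hzero : ∀ k : ℕ, k + 1 ≤ r → ∀ i j : Fin N,
    dbar dv (k + 2) ≤ (i : ℕ) → (j : ℕ) < dbar dv (k + 1) → B i j = 0
  /-- the subdiagonal blocks `B_{k+1}` have maximal rank `d_{k+1}` -/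
  hrank : ∀ k, k < r →
    (Matrix.of fun (a : Fin (dv (k + 1))) (b : Fin (dv k)) =>
      B (idx N hN (dbar dv (k + 1) + a)) (idx N hN (dbar dv k + b))).rank = dv (k + 1)
  /-- second order coefficients `a_{ij}` -/
  a2 : Fin d → Fin d → ℝ → (Fin N → ℝ) → ℝ
  /-- first order coefficients `a_i` -/
  a1 : Fin d → ℝ → (Fin N → ℝ) → ℝ
  /-- zeroth order coefficient `a` -/
  a0 : ℝ → (Fin N → ℝ) → ℝ
  /-- ellipticity constant `μ` -/
  μ : ℝ
  hμ : 0 < μ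
  /-- Hölder exponent `α` -/
  α : ℝ
  hα0 : 0 < α
  hα1 : α ≤ 1
  /-- a bound for the `α`-Hölder norms of the coefficients -/
  M : ℝ
  hsymm : ∀ i j t x, a2 i j t x = a2 j i t x
  hmeas2 : ∀ i j, Measurable (Function.uncurry (a2 i j))
  hmeas1 : ∀ i, Measurable (Function.uncurry (a1 i))
  hmeas0 : Measurable (Function.uncurry a0)
  /-- coercivity on `ℝ^d`, for a.e. `t ∈ [0,T̄]` -/
  hell : ∀ᵐ t ∂(volume.restrict (Set.Icc (0 : ℝ) Tbar)), ∀ (x : Fin N → ℝ) (ξ : Fin d → ℝ),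
    μ⁻¹ * ∑ i, ξ i ^ 2 ≤ ∑ i, ∑ j, a2 i j t x * ξ i * ξ j ∧
    ∑ i, ∑ j, a2 i j t x * ξ i * ξ j ≤ μ * ∑ i, ξ i ^ 2
  /-- uniform boundedness of the coefficients, for a.e. `t ∈ [0,T̄]` -/
  hbd : ∀ᵐ t ∂(volume.restrict (Set.Icc (0 : ℝ) Tbar)), ∀ x : Fin N → ℝ,
    (∀ i j, |a2 i j t x| ≤ M) ∧ (∀ i, |a1 i t x| ≤ M) ∧ |a0 t x| ≤ M
  /-- uniform anisotropic `α`-Hölder continuity in `x`, for a.e. `t ∈ [0,T̄]` -/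
  hHold : ∀ᵐ t ∂(volume.restrict (Set.Icc (0 : ℝ) Tbar)), ∀ x y : Fin N → ℝ,
    (∀ i j, |a2 i j t x - a2 i j t y| ≤ M * Bnorm N r dv (x - y) ^ α) ∧
    (∀ i, |a1 i t x - a1 i t y| ≤ M * Bnorm N r dv (x - y) ^ α) ∧
    |a0 t x - a0 t y| ≤ M * Bnorm N r dv (x - y) ^ α

namespace Setting

variable {N d : ℕ}

/-- The matrix exponential `e^{tB}`. -/
def mexp (S : Setting N d) (t : ℝ) : Matrix (Fin N) (Fin N) ℝ :=
  NormedSpace.exp (t • S.B)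

/-- The covariance matrix `𝒞(t)` of the prototype Kolmogorov operator. -/
def CmatK (S : Setting N d) (t : ℝ) : Matrix (Fin N) (Fin N) ℝ :=
  Matrix.of fun i j => ∫ τ in (0 : ℝ)..t, (S.mexp (t - τ) * Emat N d * (S.mexp (t - τ))ᵀ) i j

/-- The Gaussian fundamental solution `Γ^δ(t,x;T,y)` of the prototype Kolmogorov operator. -/
def GammaK (S : Setting N d) (δ t : ℝ) (x : Fin N → ℝ) (T : ℝ) (y : Fin N → ℝ) : ℝ :=
  gauss N (δ • S.CmatK (T - t)) (y - (S.mexp (T - t)).mulVec x)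

/-- The frozen diffusion matrix `A^{(s,v)}(τ)`. -/
def Afroz (S : Setting N d) (s : ℝ) (v : Fin N → ℝ) (τ : ℝ) : Matrix (Fin N) (Fin N) ℝ :=
  Matrix.of fun i j =>
    if hi : (i : ℕ) < d then
      if hj : (j : ℕ) < d then S.a2 ⟨i, hi⟩ ⟨j, hj⟩ τ ((S.mexp (τ - s)).mulVec v) else 0
    else 0

/-- The frozen covariance matrix `𝒞^{(s,v)}(t,T)`. -/
def Cfroz (S : Setting N d) (s : ℝ) (v : Fin N → ℝ) (t T : ℝ) : Matrix (Fin N) (Fin N) ℝ :=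
  Matrix.of fun i j => ∫ τ in t..T, (S.mexp (T - τ) * S.Afroz s v τ * (S.mexp (T - τ))ᵀ) i j

/-- The frozen Gaussian kernel `Γ^{(s,v)}(t,x;T,y)`. -/
def Gfroz (S : Setting N d) (s : ℝ) (v : Fin N → ℝ) (t : ℝ) (x : Fin N → ℝ)
    (T : ℝ) (y : Fin N → ℝ) : ℝ :=
  gauss N (S.Cfroz s v t T) (y - (S.mexp (T - t)).mulVec x)

/-- The parametrix `𝐏(t,x;T,y) = Γ^{(T,y)}(t,x;T,y)`. -/
def Pmx (S : Setting N d) (t : ℝ) (x : Fin N → ℝ) (T : ℝ) (y : Fin N → ℝ) : ℝ :=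
  S.Gfroz T y t x T y

/-- Embedding of the first `d` coordinates. -/
def ci (S : Setting N d) (i : Fin d) : Fin N := Fin.castLE S.hdN i

/-- The operator `𝒜` (acting on the space variable, at time `t`). -/
def Aop (S : Setting N d) (t : ℝ) (u : (Fin N → ℝ) → ℝ) (x : Fin N → ℝ) : ℝ :=
  (1 / 2) * ∑ i : Fin d, ∑ j : Fin d, S.a2 i j t x * pd N (S.ci i) (pd N (S.ci j) u) x
    + ∑ i : Fin d, S.a1 i t x * pd N (S.ci i) u x + S.a0 t x * u x

/-- The frozen operator `𝒜^{(s,v)}` (acting on the space variable, at time `t`). -/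
def AopF (S : Setting N d) (s : ℝ) (v : Fin N → ℝ) (t : ℝ) (u : (Fin N → ℝ) → ℝ)
    (x : Fin N → ℝ) : ℝ :=
  (1 / 2) * ∑ i : Fin d, ∑ j : Fin d,
    S.a2 i j t ((S.mexp (t - s)).mulVec v) * pd N (S.ci i) (pd N (S.ci j) u) x

/-- The terms `φ_{k+1}` of the parametrix series (indexed from `0`). -/
def phiSeq (S : Setting N d) : ℕ → ℝ → (Fin N → ℝ) → ℝ → (Fin N → ℝ) → ℝ
  | 0 => fun t x T y =>
      S.Aop t (fun z => S.Pmx t z T y) x - S.AopF T y t (fun z => S.Pmx t z T y) x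
  | k + 1 => fun t x T y =>
      ∫ τ in t..T, ∫ η : Fin N → ℝ,
        (S.Aop t (fun z => S.Pmx t z τ η) x - S.AopF τ η t (fun z => S.Pmx t z τ η) x)
          * S.phiSeq k τ η T y

/-- The sum `φ = Σ_{k≥1} φ_k` of the parametrix series. -/
def phiSum (S : Setting N d) (t : ℝ) (x : Fin N → ℝ) (T : ℝ) (y : Fin N → ℝ) : ℝ :=
  ∑' k : ℕ, S.phiSeq k t x T y

/-- The correction term `Φ(t,x;T,y)`. -/
def PhiFn (S : Setting N d) (t : ℝ) (x : Fin N → ℝ) (T : ℝ) (y : Fin N → ℝ) : ℝ :=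
  ∫ τ in t..T, ∫ η : Fin N → ℝ, S.Pmx t x τ η * S.phiSum τ η T y

/-- The candidate fundamental solution `p = 𝐏 + Φ`. -/
def pFn (S : Setting N d) (t : ℝ) (x : Fin N → ℝ) (T : ℝ) (y : Fin N → ℝ) : ℝ :=
  S.Pmx t x T y + S.PhiFn t x T y

/-- `f ∈ L¹_loc([0,T); C_b(ℝ^N))`. -/
def LlocCb (N : ℕ) (T : ℝ) (f : ℝ → (Fin N → ℝ) → ℝ) : Prop :=
  (∀ t ∈ Set.Ico (0 : ℝ) T, Continuous (f t) ∧ ∃ C, ∀ x, |f t x| ≤ C) ∧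
  ∀ b ∈ Set.Ico (0 : ℝ) T, IntegrableOn (fun t => ⨆ x : Fin N → ℝ, |f t x|) (Set.Icc 0 b)

/-- Strong Lie solution (Definition 1.4) of `𝒜u + Yu = f` on `𝒮_T`. -/
def IsLieSolution (S : Setting N d) (T : ℝ) (u f : ℝ → (Fin N → ℝ) → ℝ) : Prop :=
  LlocCb N T f ∧
  ContinuousOn (fun q : ℝ × (Fin N → ℝ) => u q.1 q.2) (Set.Ioo 0 T ×ˢ Set.univ) ∧
  (∀ i : Fin d, LlocCb N T fun t => pd N (S.ci i) (u t)) ∧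
  (∀ i j : Fin d, LlocCb N T fun t => pd N (S.ci i) (pd N (S.ci j) (u t))) ∧
  ∀ t ∈ Set.Ioo (0 : ℝ) T, ∀ x : Fin N → ℝ, ∀ s ∈ Set.Ico t T,
    u s ((S.mexp (s - t)).mulVec x) =
      u t x - ∫ τ in t..s,
        (S.Aop τ (u τ) ((S.mexp (τ - t)).mulVec x) - f τ ((S.mexp (τ - t)).mulVec x))

/-- Fundamental solution of `𝒜 + Y` (Definition 1.5). -/
def IsFundamentalSolution (S : Setting N d)
    (q : ℝ → (Fin N → ℝ) → ℝ → (Fin N → ℝ) → ℝ) : Prop :=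
  ∀ T ∈ Set.Ioo (0 : ℝ) S.Tbar, ∀ y : Fin N → ℝ,
    S.IsLieSolution T (fun t x => q t x T y) (fun _ _ => 0) ∧
    ∀ g : (Fin N → ℝ) → ℝ, Continuous g → (∃ C, ∀ x, |g x| ≤ C) →
      Tendsto (fun p : ℝ × (Fin N → ℝ) => ∫ η : Fin N → ℝ, q p.1 p.2 T η * g η)
        (𝓝[(Set.Iio T) ×ˢ (Set.univ : Set (Fin N → ℝ))] (T, y)) (𝓝 (g y))

end Setting

/-! The entry `(e^{tB})ᵢⱼ` is the power series `∑ₘ tᵐ (Bᵐ)ᵢⱼ / m!`. Since `B` maps the `k`-th block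
only into the blocks `≤ k + 1`, `(Bᵐ)ᵢⱼ = 0` as soon as the block of `i` exceeds the block of `j`
by more than `m`; so the terms of degree `< n` vanish, and the Taylor remainder of the analytic
function `t ↦ e^{tB}` after degree `n` is `O(t^{n+1})`. -/

section MatrixExponential

open Asymptotics NormedSpace
open scoped Nat

variable {𝕂 : Type*} [RCLike 𝕂]

theorem _root_.NormedSpace.exp_smul_sub_sum_isBigO {𝔸 : Type*} [NormedRing 𝔸]
    [NormedAlgebra 𝕂 𝔸] [CompleteSpace 𝔸] (a : 𝔸) (n : ℕ) :
    (fun t : 𝕂 => exp (t • a) - ∑ m ∈ Finset.range n, (t ^ m / m !) • a ^ m) =O[𝓝 0]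
      fun t => t ^ n := by
  have hexp := (exp_hasFPowerSeriesAt_zero (𝕂 := 𝕂) (𝔸 := 𝔸)).isBigO_sub_partialSum_pow n
  have hsmul : Tendsto (fun t : 𝕂 => t • a) (𝓝 0) (𝓝 0) :=
    (continuous_id.smul continuous_const).tendsto' 0 0 (zero_smul 𝕂 a)
  have hcomp := hexp.comp_tendsto hsmul
  simp only [Function.comp_def, zero_add, FormalMultilinearSeries.partialSum, expSeries_apply_eq,
    smul_pow, smul_smul] at hcomp
  refine (hcomp.congr_left fun t => ?_).trans ?_
  · simp only [div_eq_inv_mul]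
  · refine isBigO_of_le' (c := ‖a‖ ^ n) _ fun t => ?_
    rw [norm_smul, mul_pow, norm_pow, Real.norm_of_nonneg (by positivity), mul_comm]

open scoped Matrix.Norms.Operator in
theorem _root_.Matrix.norm_apply_le_linfty_opNorm {m n α : Type*} [Fintype m] [Fintype n]
    [SeminormedAddCommGroup α] (A : Matrix m n α) (i : m) (j : n) : ‖A i j‖ ≤ ‖A‖ := by
  rw [Matrix.linfty_opNorm_def, ← coe_nnnorm, NNReal.coe_le_coe]
  exact (Finset.single_le_sum (fun _ _ => bot_le) (Finset.mem_univ j)).trans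
    (Finset.le_sup (f := fun i => ∑ k, ‖A i k‖₊) (Finset.mem_univ i))

variable {ι : Type*} [Fintype ι] [DecidableEq ι]

theorem _root_.Matrix.exp_smul_apply_sub_sum_isBigO (A : Matrix ι ι 𝕂) (i j : ι) (n : ℕ) :
    (fun t : 𝕂 => exp (t • A) i j - ∑ m ∈ Finset.range n, t ^ m / m ! * (A ^ m) i j) =O[𝓝 0]
      fun t => t ^ n := by
  open scoped Matrix.Norms.Operator in
  exact ((isBigO_of_le' (c := 1) _ fun t => by
    simpa only [one_mul] using Matrix.norm_apply_le_linfty_opNorm (_ : Matrix ι ι 𝕂) i j).trans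
    (exp_smul_sub_sum_isBigO A n)).congr_left fun t => by
      simp only [Matrix.sub_apply, Matrix.sum_apply, Matrix.smul_apply, smul_eq_mul]
      -- the two sides differ only in the topology used to define `exp`: the operator-norm one
      -- and the product one, which agree definitionally
      rfl

theorem _root_.Matrix.exp_smul_apply_isBigO_of_pow_apply_eq_zero (A : Matrix ι ι 𝕂) {i j : ι}
    {n : ℕ} (hA : ∀ m < n, (A ^ m) i j = 0) :
    (fun t : 𝕂 => exp (t • A) i j - t ^ n * (A ^ n) i j / n !) =O[𝓝 0] (fun t => t ^ (n + 1)) ∧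
      (fun t : 𝕂 => exp (t • A) i j) =O[𝓝 0] fun t => t ^ n := by
  have hsum (t : 𝕂) :
      ∑ m ∈ Finset.range (n + 1), t ^ m / m ! * (A ^ m) i j = t ^ n * (A ^ n) i j / n ! := by
    rw [Finset.sum_range_succ, Finset.sum_eq_zero fun m hm => by
      rw [hA m (Finset.mem_range.1 hm), mul_zero], zero_add, div_mul_eq_mul_div]
  have hrem := (Matrix.exp_smul_apply_sub_sum_isBigO A i j (n + 1)).congr_left
    fun t => by rw [hsum]
  have hmain : (fun t : 𝕂 => t ^ n * (A ^ n) i j / n !) =O[𝓝 0] fun t => t ^ n :=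
    isBigO_of_le' (c := ‖(A ^ n) i j / (n ! : 𝕂)‖) _ fun t => by
      rw [mul_div_assoc, norm_mul, mul_comm]
  refine ⟨hrem, ?_⟩
  simpa using (hrem.trans (isLittleO_pow_pow n.lt_succ_self).isBigO).add hmain

end MatrixExponential

theorem _root_.Matrix.pow_apply_eq_zero_of_add_lt {ι R : Type*} [Fintype ι] [DecidableEq ι]
    [Semiring R] (β : ι → ℕ) {A : Matrix ι ι R} (hA : ∀ i j, β j + 1 < β i → A i j = 0) :
    ∀ m {i j}, β j + m < β i → (A ^ m) i j = 0
  | 0, i, j, hij => by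
    rw [pow_zero, Matrix.one_apply_ne]
    rintro rfl
    omega
  | m + 1, i, j, hij => by
    rw [pow_succ, Matrix.mul_apply]
    refine Finset.sum_eq_zero fun s _ => ?_
    by_cases hs : β j + 1 < β s
    · rw [hA s j hs, mul_zero]
    · rw [Matrix.pow_apply_eq_zero_of_add_lt β hA m (by omega), zero_mul]

theorem dbar_mono (dv : ℕ → ℕ) : Monotone (dbar dv) := fun _ _ hab =>
  Finset.sum_le_sum_of_subset (Finset.range_subset_range.2 hab)

theorem le_of_dbar_le_of_lt_dbar {dv : ℕ → ℕ} {a b s : ℕ} (ha : dbar dv a ≤ s)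
    (hb : s < dbar dv (b + 1)) : a ≤ b := by
  by_contra! hba
  exact (ha.trans_lt hb).not_ge (dbar_mono dv hba)

theorem exists_dbar_le_lt_dbar {dv : ℕ → ℕ} {r s : ℕ} (hs : s < dbar dv (r + 1)) :
    ∃ b ≤ r, dbar dv b ≤ s ∧ s < dbar dv (b + 1) := by
  induction r with
  | zero => exact ⟨0, le_rfl, by simp [dbar], hs⟩
  | succ r ih =>
    by_cases hr : dbar dv (r + 1) ≤ s
    · exact ⟨r + 1, le_rfl, hr, hs⟩
    · obtain ⟨b, hbr, hb⟩ := ih (not_le.1 hr)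
      exact ⟨b, hbr.trans r.le_succ, hb⟩

theorem stmt_13_general (N r : ℕ) (dv : ℕ → ℕ)
    (hsum : dbar dv (r + 1) = N) (B : Matrix (Fin N) (Fin N) ℝ)
    (hzero : ∀ h k : ℕ, h ≤ r → k ≤ r → k + 1 < h → ∀ i j : Fin N,
      dbar dv h ≤ (i : ℕ) → (i : ℕ) < dbar dv (h + 1) →
      dbar dv k ≤ (j : ℕ) → (j : ℕ) < dbar dv (k + 1) → B i j = 0)
    (h k n : ℕ) (hn : k + n = h)
    (i j : Fin N)
    (hi1 : dbar dv h ≤ (i : ℕ))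
    (hj2 : (j : ℕ) < dbar dv (k + 1)) :
    (fun t : ℝ =>
        NormedSpace.exp (t • B) i j - t ^ n * (B ^ n) i j / (n.factorial : ℝ))
      =O[nhds (0 : ℝ)] (fun t => t ^ (n + 1)) ∧
    (fun t : ℝ => NormedSpace.exp (t • B) i j) =O[nhds (0 : ℝ)] fun t => t ^ n := by
  choose β hβr hβ₁ hβ₂ using fun s : Fin N =>
    exists_dbar_le_lt_dbar (s.isLt.trans_eq hsum.symm)
  have hB : ∀ s s', β s' + 1 < β s → B s s' = 0 := fun s s' hss' =>
    hzero _ _ (hβr s) (hβr s') hss' s s' (hβ₁ s) (hβ₂ s) (hβ₁ s') (hβ₂ s')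
  have hi : h ≤ β i := le_of_dbar_le_of_lt_dbar hi1 (hβ₂ i)
  have hj : β j ≤ k := le_of_dbar_le_of_lt_dbar (hβ₁ j) hj2
  exact B.exp_smul_apply_isBigO_of_pow_apply_eq_zero fun m hm =>
    B.pow_apply_eq_zero_of_add_lt β hB m (by omega)

/-- Lemma A.5: if `i` belongs to the `h`-th block and `j` to the `k`-th block with
`n = h − k ≥ 1`, then `(e^{tB})_{ij} = tⁿ (Bⁿ)_{ij}/n! + O(t^{n+1})`, in particular
`(e^{tB})_{ij} = O(tⁿ)`, as `t → 0`. -/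
theorem stmt_13 (N r : ℕ) (dv : ℕ → ℕ) (hpos : ∀ j ≤ r, 1 ≤ dv j)
    (hsum : dbar dv (r + 1) = N) (B : Matrix (Fin N) (Fin N) ℝ)
    (hzero : ∀ h k : ℕ, h ≤ r → k ≤ r → k + 1 < h → ∀ i j : Fin N,
      dbar dv h ≤ (i : ℕ) → (i : ℕ) < dbar dv (h + 1) →
      dbar dv k ≤ (j : ℕ) → (j : ℕ) < dbar dv (k + 1) → B i j = 0)
    (h k n : ℕ) (hh : h ≤ r) (hk : k ≤ r) (hn : k + n = h) (hn1 : 1 ≤ n)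
    (i j : Fin N)
    (hi1 : dbar dv h ≤ (i : ℕ)) (hi2 : (i : ℕ) < dbar dv (h + 1))
    (hj1 : dbar dv k ≤ (j : ℕ)) (hj2 : (j : ℕ) < dbar dv (k + 1)) :
    (fun t : ℝ =>
        NormedSpace.exp (t • B) i j - t ^ n * (B ^ n) i j / (n.factorial : ℝ))
      =O[nhds (0 : ℝ)] (fun t => t ^ (n + 1)) ∧
    (fun t : ℝ => NormedSpace.exp (t • B) i j) =O[nhds (0 : ℝ)] fun t => t ^ n :=
  stmt_13_general N r dv hsum B hzero h k n hn i j hi1 hj2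

end Paper
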